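/- Let q ≥ 2 and C₁ > 0. There exists a constant C (depending only on q and C₁) such that: for all integers 0 ≤ l₀ ≤ l₁, every family of differentiable functions (ψ_{j,l})_{l₀ ≤ j ≤ l₁, 0 ≤ l < 2^j} on [0,1] satisfying the vaguelet value and derivative decay bounds with constants C₁ and q, and all θ, θ′ ∈ [0,1]: Σ_{j=l₀}^{l₁} Σ_{l=0}^{2^j−1} ( ψ_{j,l}(θ) − ψ_{j,l}(θ′) )² ≤ C·2^{l₁}·|θ − θ′|. -/

import Mathlib

open MeasureTheory

/-- The dyadic subinterval `J_{j,l} = [l 2^{-j}, (l+1) 2^{-j}]` of `[0,1]`. -/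
def dyadicI (j l : ℕ) : Set ℝ := Set.Icc ((l : ℝ) / 2 ^ j) (((l : ℝ) + 1) / 2 ^ j)

/-- Distance between two points of `[0,1]` on the circle `ℝ/ℤ`. -/
noncomputable def circleDist (x y : ℝ) : ℝ := ⨅ k : ℤ, |x - y + (k : ℝ)|

/-- Distance from a point to a set on the circle `ℝ/ℤ`. -/
noncomputable def circleDistToSet (θ : ℝ) (J : Set ℝ) : ℝ := ⨅ x : J, circleDist θ (x : ℝ)

/-! At a fixed level `j`, the derivative bound and the mean value theorem make every `ψ_{j,l}`
`C₁ 2^j`-Lipschitz on `[0,1]`, so `(ψ(θ) - ψ(θ'))² ≤ C₁ 2^j |θ - θ'| (|ψ(θ)| + |ψ(θ')|)`.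
The value bounds then control `Σ_l |ψ_{j,l}(θ)|` uniformly in `j`: if `2^j θ ∈ [n, n+1)`, then
`2^j d(θ, J_{j,l})` is at least the distance from `n - l` to `{0, ±2^j}` minus one, so the weights
`(1 + 2^j d(θ, J_{j,l}))^{-q} ≤ (1 + 2^j d(θ, J_{j,l}))^{-2}` are dominated by three shifted copies
of the summable sequence `(1 + |z|)^{-2}` on `ℤ`. Summing `2^j` over `l₀ ≤ j ≤ l₁` gives at most
`2^{l₁ + 1}`. -/
noncomputable def decayWeight (q : ℝ) (j l : ℕ) (θ : ℝ) : ℝ :=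
  (1 + 2 ^ j * circleDistToSet θ (dyadicI j l)) ^ (-q)

noncomputable def sqDecay (z : ℤ) : ℝ := ((1 + |(z : ℝ)|) ^ 2)⁻¹

lemma sqDecay_nonneg (z : ℤ) : 0 ≤ sqDecay z := by unfold sqDecay; positivity

lemma summable_sqDecay : Summable sqDecay := by
  have h : Summable fun n : ℕ => ((1 + (n : ℝ)) ^ 2)⁻¹ := by
    simpa [add_comm] using (summable_nat_add_iff 1).mpr (Real.summable_nat_pow_inv.mpr one_lt_two)
  refine .of_nat_of_neg ?_ ?_ <;> simpa [sqDecay] using h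

lemma tsum_sqDecay_pos : 0 < ∑' z, sqDecay z :=
  summable_sqDecay.tsum_pos sqDecay_nonneg 0 (by norm_num [sqDecay])

lemma sum_sqDecay_comp_le_tsum {ι : Type*} (s : Finset ι) {g : ι → ℤ}
    (hg : Function.Injective g) : ∑ i ∈ s, sqDecay (g i) ≤ ∑' z, sqDecay z :=
  ((summable_sqDecay.comp_injective hg).sum_le_tsum s fun i _ => sqDecay_nonneg (g i)).trans
    (tsum_comp_le_tsum_of_inj summable_sqDecay sqDecay_nonneg hg)

lemma min_abs_le_abs_add_mul {a N : ℤ} (ha : |a| ≤ N) (k : ℤ) :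
    min |a| (min |a + N| |a - N|) ≤ |a + k * N| := by
  have hN : 0 ≤ N := (abs_nonneg a).trans ha
  obtain hk | rfl | hk : k ≤ -1 ∨ k = 0 ∨ 1 ≤ k := by omega
  · have : k * N ≤ -N := by nlinarith
    simp only [abs_eq_max_neg] at *
    omega
  · simp
  · have : N ≤ k * N := by nlinarith
    simp only [abs_eq_max_neg] at *
    omega

lemma circleDist_nonneg (x y : ℝ) : 0 ≤ circleDist x y :=
  Real.iInf_nonneg fun _ => abs_nonneg _

lemma circleDistToSet_nonneg (θ : ℝ) (J : Set ℝ) : 0 ≤ circleDistToSet θ J :=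
  Real.iInf_nonneg fun x => circleDist_nonneg θ x

lemma dyadicI_nonempty (j l : ℕ) : (dyadicI j l).Nonempty :=
  Set.nonempty_Icc.2 (div_le_div_of_nonneg_right (by linarith) (by positivity))

lemma abs_floor_sub_add_sub_one_le {j l : ℕ} {θ x : ℝ} (hx : x ∈ dyadicI j l) (k : ℤ) :
    |((⌊θ * 2 ^ j⌋ - l + k * 2 ^ j : ℤ) : ℝ)| - 1 ≤ 2 ^ j * |θ - x + k| := by
  have h2j : (0 : ℝ) < 2 ^ j := by positivity
  obtain ⟨hxl, hxr⟩ := hx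
  rw [div_le_iff₀ h2j] at hxl
  rw [le_div_iff₀ h2j] at hxr
  have hfl := Int.floor_le (θ * 2 ^ j)
  have hfr := Int.lt_floor_add_one (θ * 2 ^ j)
  have hclose : |((⌊θ * 2 ^ j⌋ - l + k * 2 ^ j : ℤ) : ℝ) - 2 ^ j * (θ - x + k)| ≤ 1 := by
    push_cast
    rw [abs_le]
    constructor <;> nlinarith
  have hscale : |2 ^ j * (θ - x + k)| = 2 ^ j * |θ - x + k| := by rw [abs_mul, abs_of_pos h2j]
  linarith [abs_sub_abs_le_abs_sub ((⌊θ * 2 ^ j⌋ - l + k * 2 ^ j : ℤ) : ℝ) (2 ^ j * (θ - x + k))]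

lemma min_abs_sub_one_le_circleDistToSet {j l : ℕ} (hl : l < 2 ^ j) {θ : ℝ}
    (hθ : θ ∈ Set.Icc (0 : ℝ) 1) {a : ℤ} (ha : a = ⌊θ * 2 ^ j⌋ - l) :
    ((min |a| (min |a + 2 ^ j| |a - 2 ^ j|) : ℤ) : ℝ) - 1
      ≤ 2 ^ j * circleDistToSet θ (dyadicI j l) := by
  have h2j : (0 : ℝ) < 2 ^ j := by positivity
  have hfloor_nonneg : 0 ≤ ⌊θ * 2 ^ j⌋ := Int.floor_nonneg.2 (by have := hθ.1; positivity)
  have hfloor_le : ⌊θ * 2 ^ j⌋ ≤ 2 ^ j := by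
    have : (⌊θ * 2 ^ j⌋ : ℝ) ≤ 2 ^ j := (Int.floor_le _).trans (by nlinarith [hθ.2])
    exact_mod_cast this
  have hl' : (l : ℤ) < 2 ^ j := by exact_mod_cast hl
  have ha_le : |a| ≤ 2 ^ j := abs_le.2 ⟨by omega, by omega⟩
  have := (dyadicI_nonempty j l).to_subtype
  rw [← div_le_iff₀' h2j]
  refine le_ciInf fun x => le_ciInf fun k => ?_
  rw [div_le_iff₀' h2j]
  calc ((min |a| (min |a + 2 ^ j| |a - 2 ^ j|) : ℤ) : ℝ) - 1
      ≤ |((a + k * 2 ^ j : ℤ) : ℝ)| - 1 := by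
        gcongr
        rw [← Int.cast_abs]
        exact_mod_cast min_abs_le_abs_add_mul ha_le k
    _ ≤ 2 ^ j * |θ - x + k| := ha ▸ abs_floor_sub_add_sub_one_le x.2 k

lemma inv_one_add_sq_le_four_mul_sqDecay {D : ℝ} {m : ℤ} (hm : 0 ≤ m) (hD : 0 ≤ D)
    (h : (m : ℝ) - 1 ≤ D) : ((1 + D) ^ 2)⁻¹ ≤ 4 * sqDecay m := by
  have hm' : (0 : ℝ) ≤ m := by exact_mod_cast hm
  have : (1 + m) / 2 ≤ 1 + D := by linarith
  calc ((1 + D) ^ 2)⁻¹ ≤ (((1 + (m : ℝ)) / 2) ^ 2)⁻¹ := by gcongr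
    _ = 4 * sqDecay m := by rw [sqDecay, abs_of_nonneg hm']; field_simp; ring

lemma sqDecay_min_abs_le (a N : ℤ) :
    sqDecay (min |a| (min |a + N| |a - N|)) ≤ sqDecay a + sqDecay (a + N) + sqDecay (a - N) := by
  have hA := sqDecay_nonneg a
  have hB := sqDecay_nonneg (a + N)
  have hC := sqDecay_nonneg (a - N)
  have habs (z : ℤ) : sqDecay |z| = sqDecay z := by simp [sqDecay]
  rcases min_choice |a| (min |a + N| |a - N|) with h | h <;> rw [h]
  · rw [habs]; linarith
  rcases min_choice |a + N| |a - N| with h | h <;> rw [h, habs] <;> linarith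

lemma decayWeight_le_sqDecay {q : ℝ} (hq : 2 ≤ q) {j l : ℕ} (hl : l < 2 ^ j) {θ : ℝ}
    (hθ : θ ∈ Set.Icc (0 : ℝ) 1) :
    decayWeight q j l θ ≤ 4 * (sqDecay (⌊θ * 2 ^ j⌋ - l) + sqDecay (⌊θ * 2 ^ j⌋ + 2 ^ j - l)
      + sqDecay (⌊θ * 2 ^ j⌋ - 2 ^ j - l)) := by
  set a : ℤ := ⌊θ * 2 ^ j⌋ - l with ha
  set D := 2 ^ j * circleDistToSet θ (dyadicI j l)
  have hD : 0 ≤ D := by have := circleDistToSet_nonneg θ (dyadicI j l); positivity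
  have hshift : ∀ c : ℤ, ⌊θ * 2 ^ j⌋ + c - l = a + c := fun c => by ring
  rw [hshift, sub_eq_add_neg _ (2 ^ j), hshift, ← sub_eq_add_neg]
  calc decayWeight q j l θ ≤ (1 + D) ^ (-2 : ℝ) :=
        Real.rpow_le_rpow_of_exponent_le (by linarith) (by linarith)
    _ = ((1 + D) ^ 2)⁻¹ := by rw [Real.rpow_neg (by positivity), Real.rpow_two]
    _ ≤ 4 * sqDecay (min |a| (min |a + 2 ^ j| |a - 2 ^ j|)) :=
        inv_one_add_sq_le_four_mul_sqDecay (by positivity) hD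
          (min_abs_sub_one_le_circleDistToSet hl hθ ha)
    _ ≤ _ := by gcongr; exact sqDecay_min_abs_le a (2 ^ j)

lemma sum_decayWeight_le {q : ℝ} (hq : 2 ≤ q) (j : ℕ) {θ : ℝ} (hθ : θ ∈ Set.Icc (0 : ℝ) 1) :
    ∑ l ∈ Finset.range (2 ^ j), decayWeight q j l θ ≤ 12 * ∑' z, sqDecay z := by
  set S := ∑' z, sqDecay z
  have hshift (c : ℤ) : ∑ l ∈ Finset.range (2 ^ j), sqDecay (c - l) ≤ S :=
    sum_sqDecay_comp_le_tsum _ fun l₁ l₂ h => by simpa using h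
  calc ∑ l ∈ Finset.range (2 ^ j), decayWeight q j l θ
      ≤ ∑ l ∈ Finset.range (2 ^ j), 4 * (sqDecay (⌊θ * 2 ^ j⌋ - l)
          + sqDecay (⌊θ * 2 ^ j⌋ + 2 ^ j - l) + sqDecay (⌊θ * 2 ^ j⌋ - 2 ^ j - l)) :=
        Finset.sum_le_sum fun l hl => decayWeight_le_sqDecay hq (Finset.mem_range.1 hl) hθ
    _ ≤ 4 * (S + S + S) := by
        simp only [← Finset.mul_sum, Finset.sum_add_distrib]
        gcongr <;> apply hshift
    _ = 12 * S := by ring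

lemma decayWeight_le_one {q : ℝ} (hq : 0 ≤ q) (j l : ℕ) (θ : ℝ) : decayWeight q j l θ ≤ 1 := by
  have : 0 ≤ 2 ^ j * circleDistToSet θ (dyadicI j l) := by
    have := circleDistToSet_nonneg θ (dyadicI j l); positivity
  exact Real.rpow_le_one_of_one_le_of_nonpos (by linarith) (by linarith)

lemma sum_sq_sub_le_of_decay {q C₁ : ℝ} (hq : 2 ≤ q) (hC₁ : 0 ≤ C₁) {j : ℕ} {ψ : ℕ → ℝ → ℝ}
    (hdiff : ∀ l < 2 ^ j, Differentiable ℝ (ψ l))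
    (hbound : ∀ l < 2 ^ j, ∀ θ ∈ Set.Icc (0 : ℝ) 1, |ψ l θ| ≤ C₁ * decayWeight q j l θ ∧
      |deriv (ψ l) θ| ≤ C₁ * 2 ^ j * decayWeight (q - 1) j l θ)
    {θ θ' : ℝ} (hθ : θ ∈ Set.Icc (0 : ℝ) 1) (hθ' : θ' ∈ Set.Icc (0 : ℝ) 1) :
    ∑ l ∈ Finset.range (2 ^ j), (ψ l θ - ψ l θ') ^ 2
      ≤ 24 * (∑' z, sqDecay z) * C₁ ^ 2 * 2 ^ j * |θ - θ'| := by
  set L := C₁ * 2 ^ j * |θ - θ'|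
  have hlip : ∀ l < 2 ^ j, |ψ l θ - ψ l θ'| ≤ L := fun l hl =>
    Convex.norm_image_sub_le_of_norm_deriv_le (fun x _ => (hdiff l hl).differentiableAt)
      (fun x hx => (hbound l hl x hx).2.trans <| mul_le_of_le_one_right (by positivity)
        (decayWeight_le_one (by linarith) j l x)) (convex_Icc 0 1) hθ' hθ
  have hterm : ∀ l ∈ Finset.range (2 ^ j),
      (ψ l θ - ψ l θ') ^ 2 ≤ L * C₁ * (decayWeight q j l θ + decayWeight q j l θ') := by
    intro l hl
    rw [Finset.mem_range] at hl
    calc (ψ l θ - ψ l θ') ^ 2 = |ψ l θ - ψ l θ'| * |ψ l θ - ψ l θ'| := by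
          rw [abs_mul_abs_self, sq]
      _ ≤ L * (|ψ l θ| + |ψ l θ'|) :=
          mul_le_mul (hlip l hl) (abs_sub _ _) (abs_nonneg _) (by positivity)
      _ ≤ L * (C₁ * decayWeight q j l θ + C₁ * decayWeight q j l θ') := by
          gcongr
          exacts [(hbound l hl θ hθ).1, (hbound l hl θ' hθ').1]
      _ = L * C₁ * (decayWeight q j l θ + decayWeight q j l θ') := by ring
  calc ∑ l ∈ Finset.range (2 ^ j), (ψ l θ - ψ l θ') ^ 2
      ≤ L * C₁ * (∑ l ∈ Finset.range (2 ^ j), decayWeight q j l θ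
          + ∑ l ∈ Finset.range (2 ^ j), decayWeight q j l θ') := by
        rw [← Finset.sum_add_distrib, Finset.mul_sum]
        exact Finset.sum_le_sum hterm
    _ ≤ L * C₁ * (12 * ∑' z, sqDecay z + 12 * ∑' z, sqDecay z) := by
        gcongr
        exacts [sum_decayWeight_le hq j hθ, sum_decayWeight_le hq j hθ']
    _ = 24 * (∑' z, sqDecay z) * C₁ ^ 2 * 2 ^ j * |θ - θ'| := by ring

lemma sum_Icc_two_pow_le (l₀ l₁ : ℕ) : ∑ j ∈ Finset.Icc l₀ l₁, (2 : ℝ) ^ j ≤ 2 * 2 ^ l₁ := by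
  calc ∑ j ∈ Finset.Icc l₀ l₁, (2 : ℝ) ^ j ≤ ∑ j ∈ Finset.range (l₁ + 1), (2 : ℝ) ^ j :=
        Finset.sum_le_sum_of_subset_of_nonneg
          (fun j hj => by simp only [Finset.mem_Icc, Finset.mem_range] at hj ⊢; omega)
          (fun _ _ _ => by positivity)
    _ ≤ 2 * 2 ^ l₁ := by rw [geom_sum_eq (by norm_num)]; rw [pow_succ]; linarith

/-- Second-moment bound for increments of the Gaussian field over the dyadic
levels `l₀ ≤ j ≤ l₁`: if the `ψ_{j,l}` are differentiable and satisfy the value and derivative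
decay bounds with constants `C₁, q` (`q ≥ 2`), then for all `θ, θ' ∈ [0,1]`,
`Σ_{j=l₀}^{l₁} Σ_{l<2^j} (ψ_{j,l}(θ) - ψ_{j,l}(θ'))² ≤ C 2^{l₁} |θ - θ'|`
with `C = C(q, C₁)`. -/
theorem block_increment_bound (q C₁ : ℝ) (hq : 2 ≤ q) (hC₁ : 0 < C₁) :
    ∃ C : ℝ, 0 < C ∧
      ∀ l₀ l₁ : ℕ, l₀ ≤ l₁ →
      ∀ ψ : ℕ → ℕ → ℝ → ℝ,
        (∀ j, l₀ ≤ j → j ≤ l₁ → ∀ l < 2 ^ j, Differentiable ℝ (ψ j l)) →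
        (∀ j, l₀ ≤ j → j ≤ l₁ → ∀ l < 2 ^ j, ∀ θ ∈ Set.Icc (0:ℝ) 1,
          |ψ j l θ| ≤ C₁ * (1 + 2 ^ j * circleDistToSet θ (dyadicI j l)) ^ (-q) ∧
          |deriv (ψ j l) θ| ≤
            C₁ * 2 ^ j * (1 + 2 ^ j * circleDistToSet θ (dyadicI j l)) ^ (-(q - 1))) →
      ∀ θ ∈ Set.Icc (0:ℝ) 1, ∀ θ' ∈ Set.Icc (0:ℝ) 1,
        (∑ j ∈ Finset.Icc l₀ l₁, ∑ l ∈ Finset.range (2 ^ j),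
            (ψ j l θ - ψ j l θ') ^ 2) ≤ C * 2 ^ l₁ * |θ - θ'| := by
  have hS := tsum_sqDecay_pos
  refine ⟨48 * (∑' z, sqDecay z) * C₁ ^ 2, by positivity, ?_⟩
  intro l₀ l₁ _ ψ hdiff hbound θ hθ θ' hθ'
  calc ∑ j ∈ Finset.Icc l₀ l₁, ∑ l ∈ Finset.range (2 ^ j), (ψ j l θ - ψ j l θ') ^ 2
      ≤ ∑ j ∈ Finset.Icc l₀ l₁, 24 * (∑' z, sqDecay z) * C₁ ^ 2 * 2 ^ j * |θ - θ'| :=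
        Finset.sum_le_sum fun j hj => by
          obtain ⟨hj₀, hj₁⟩ := Finset.mem_Icc.1 hj
          exact sum_sq_sub_le_of_decay hq hC₁.le (hdiff j hj₀ hj₁) (hbound j hj₀ hj₁) hθ hθ'
    _ = 24 * (∑' z, sqDecay z) * C₁ ^ 2 * |θ - θ'| * ∑ j ∈ Finset.Icc l₀ l₁, (2 : ℝ) ^ j := by
        rw [Finset.mul_sum]; exact Finset.sum_congr rfl fun _ _ => by ring
    _ ≤ 24 * (∑' z, sqDecay z) * C₁ ^ 2 * |θ - θ'| * (2 * 2 ^ l₁) := by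
        gcongr; exact sum_Icc_two_pow_le l₀ l₁
    _ = 48 * (∑' z, sqDecay z) * C₁ ^ 2 * 2 ^ l₁ * |θ - θ'| := by ring
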